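/- Let f : ℝ³ → ℝ be three times continuously differentiable and write f_p, f_pp, f_ppp for its first, second and third partial derivatives with respect to the third argument. Define L(x, y, p, Y, P) := (Y − p)⁻¹ (P − f(x,y,p)) − (2/3) f_p(x,y,p) − (1/6) f_pp(x,y,p)(Y − p) for (x,y,p,Y,P) ∈ ℝ⁵ with Y ≠ p. Let I ⊆ ℝ be an open interval, y : I → ℝ twice differentiable, p : I → ℝ differentiable, with y'(x) ≠ p(x) for all x ∈ I. Then for every x ∈ I: ∂L/∂p evaluated at (x, y(x), p(x), y'(x), p'(x)) minus the derivative at x of the function t ↦ (y'(t) − p(t))⁻¹ equals (y'(x) − p(x))⁻² · [ y''(x) − f − f_p·(y'(x) − p(x)) − ½ f_pp·(y'(x) − p(x))² − (1/6) f_ppp·(y'(x) − p(x))³ ], where f, f_p, f_pp, f_ppp are evaluated at (x, y(x), p(x)). (Here ∂L/∂p denotes the partial derivative of L in its third slot, and (y'(t) − p(t))⁻¹ = ∂L/∂P along the curve.) -/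

import Mathlib

/-!
Differentiating `L` in `p` gives `(Y - p)⁻² (P - f - f_p (Y - p) - ½ f_pp (Y - p)² - ⅙ f_ppp (Y - p)³)`:
the coefficients `2/3` and `1/6` of `L` are chosen exactly so that the `f_pp` terms combine to `½`.
Along the curve, `d/dx (y' - p)⁻¹ = -(y'' - p') (y' - p)⁻²`, and subtracting it replaces `P = p'` by `y''`.
-/

/-- First partial derivative of f(x,y,p) in the third argument. -/
noncomputable def fp (f : ℝ → ℝ → ℝ → ℝ) (x y q : ℝ) : ℝ :=
  deriv (fun t => f x y t) q

/-- Second partial derivative of f(x,y,p) in the third argument. -/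
noncomputable def fpp (f : ℝ → ℝ → ℝ → ℝ) (x y q : ℝ) : ℝ :=
  deriv (fun t => fp f x y t) q

/-- Third partial derivative of f(x,y,p) in the third argument. -/
noncomputable def fppp (f : ℝ → ℝ → ℝ → ℝ) (x y q : ℝ) : ℝ :=
  deriv (fun t => fpp f x y t) q

/-- The Kropina Lagrangian
L(x,y,p,Y,P) = (Y−p)⁻¹ (P − f(x,y,p)) − (2/3) f_p(x,y,p) − (1/6) f_pp(x,y,p) (Y−p). -/
noncomputable def Lag (f : ℝ → ℝ → ℝ → ℝ) (x y p Y P : ℝ) : ℝ :=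
  (Y - p)⁻¹ * (P - f x y p) - (2/3) * fp f x y p - (1/6) * fpp f x y p * (Y - p)

theorem contDiff_of_contDiff_uncurry₃ {n : WithTop ℕ∞} {f : ℝ → ℝ → ℝ → ℝ}
    (hf : ContDiff ℝ n (fun q : ℝ × ℝ × ℝ => f q.1 q.2.1 q.2.2)) (a b : ℝ) :
    ContDiff ℝ n (f a b) :=
  hf.comp (contDiff_const.prodMk (contDiff_const.prodMk contDiff_id))

theorem contDiff_fp {n : ℕ} {f : ℝ → ℝ → ℝ → ℝ} {a b : ℝ} (hf : ContDiff ℝ (n + 1) (f a b)) :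
    ContDiff ℝ n (fp f a b) :=
  (contDiff_succ_iff_deriv.mp hf).2.2

theorem hasDerivAt_Lag_p {f : ℝ → ℝ → ℝ → ℝ} {a b q Y P : ℝ}
    (h₀ : DifferentiableAt ℝ (f a b) q) (h₁ : DifferentiableAt ℝ (fp f a b) q)
    (h₂ : DifferentiableAt ℝ (fpp f a b) q) (hYq : Y ≠ q) :
    HasDerivAt (fun t => Lag f a b t Y P)
      (((Y - q) ^ 2)⁻¹ * (P - f a b q - fp f a b q * (Y - q)
        - (1/2) * fpp f a b q * (Y - q) ^ 2 - (1/6) * fppp f a b q * (Y - q) ^ 3)) q := by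
  have hD : Y - q ≠ 0 := sub_ne_zero.mpr hYq
  have hsub : HasDerivAt (fun t : ℝ => Y - t) (-1) q := by
    simpa using (hasDerivAt_id q).const_sub Y
  have hf₀ : HasDerivAt (f a b) (fp f a b q) q := h₀.hasDerivAt
  have hf₁ : HasDerivAt (fp f a b) (fpp f a b q) q := h₁.hasDerivAt
  have hf₂ : HasDerivAt (fpp f a b) (fppp f a b q) q := h₂.hasDerivAt
  refine (((hsub.inv hD).mul ((hasDerivAt_const q P).sub hf₀)).sub (hf₁.const_mul (2/3))).sub
    ((hf₂.const_mul (1/6)).mul hsub) |>.congr_deriv ?_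
  simp only [Pi.sub_apply, Pi.inv_apply]
  field_simp
  ring

theorem stmt_15_general (f : ℝ → ℝ → ℝ → ℝ)
    (hf : ContDiff ℝ 3 (fun q : ℝ × ℝ × ℝ => f q.1 q.2.1 q.2.2))
    (I : Set ℝ)
    (y p : ℝ → ℝ)
    (hy' : ∀ x ∈ I, DifferentiableAt ℝ (deriv y) x)
    (hp : ∀ x ∈ I, DifferentiableAt ℝ p x)
    (htrans : ∀ x ∈ I, deriv y x ≠ p x) :
    ∀ x ∈ I,
      deriv (fun q => Lag f x (y x) q (deriv y x) (deriv p x)) (p x)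
          - deriv (fun t => (deriv y t - p t)⁻¹) x
        = ((deriv y x - p x)^2)⁻¹ *
            (deriv (deriv y) x - f x (y x) (p x)
              - fp f x (y x) (p x) * (deriv y x - p x)
              - (1/2) * fpp f x (y x) (p x) * (deriv y x - p x)^2
              - (1/6) * fppp f x (y x) (p x) * (deriv y x - p x)^3) := by
  intro x hx
  have hf₀ : ContDiff ℝ (2 + 1) (f x (y x)) := contDiff_of_contDiff_uncurry₃ hf x (y x)
  have hf₁ : ContDiff ℝ (1 + 1) (fp f x (y x)) := contDiff_fp hf₀
  have hf₂ : ContDiff ℝ 1 (fpp f x (y x)) := contDiff_fp (f := fp f) hf₁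
  have hcurve : HasDerivAt (fun t => (deriv y t - p t)⁻¹)
      (-(deriv (deriv y) x - deriv p x) / (deriv y x - p x) ^ 2) x :=
    ((hy' x hx).hasDerivAt.sub (hp x hx).hasDerivAt).inv (sub_ne_zero.mpr (htrans x hx))
  rw [(hasDerivAt_Lag_p (hf₀.differentiable (by norm_num) _) (hf₁.differentiable (by norm_num) _)
    (hf₂.differentiable one_ne_zero _) (htrans x hx)).deriv, hcurve.deriv]
  ring

/-- the Euler–Lagrange expression of the Kropina Lagrangian L with respect
to p along a transversal curve x ↦ (x, y(x), p(x)) equals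
(y'−p)⁻² [ y'' − f − f_p(y'−p) − ½ f_pp(y'−p)² − (1/6) f_ppp(y'−p)³ ]. -/
theorem stmt_15 (f : ℝ → ℝ → ℝ → ℝ)
    (hf : ContDiff ℝ 3 (fun q : ℝ × ℝ × ℝ => f q.1 q.2.1 q.2.2))
    (I : Set ℝ) (hI : IsOpen I)
    (y p : ℝ → ℝ)
    (hy : ∀ x ∈ I, DifferentiableAt ℝ y x)
    (hy' : ∀ x ∈ I, DifferentiableAt ℝ (deriv y) x)
    (hp : ∀ x ∈ I, DifferentiableAt ℝ p x)
    (htrans : ∀ x ∈ I, deriv y x ≠ p x) :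
    ∀ x ∈ I,
      deriv (fun q => Lag f x (y x) q (deriv y x) (deriv p x)) (p x)
          - deriv (fun t => (deriv y t - p t)⁻¹) x
        = ((deriv y x - p x)^2)⁻¹ *
            (deriv (deriv y) x - f x (y x) (p x)
              - fp f x (y x) (p x) * (deriv y x - p x)
              - (1/2) * fpp f x (y x) (p x) * (deriv y x - p x)^2
              - (1/6) * fppp f x (y x) (p x) * (deriv y x - p x)^3) :=
  stmt_15_general f hf I y p hy' hp htrans
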